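/- arXiv:1811.09808 — 2 statements merged into one kernel-verified Lean document; each statement's English description precedes it below -/
import Mathlib

section
/- Fix a horizontal Fourier frequency ξ = (ξ₁, ξ₂) ∈ ℝ² and a vertical frequency k ∈ ℤ. The eigenvalue equation for the Fourier symbol of the acoustic propagator, namely i(ξ₁ û₁ + ξ₂ û₂ + k û₃) = λ p̂ together with i(ξ₁, ξ₂, k) p̂ − (û₂, −û₁, 0) = λ û, admits a nontrivial solution (p̂, û) ∈ ℂ⁴ only if λ² = −(1 + |ξ|² + k² ± √((1 + |ξ|² + k²)² − 4k²))/2. -/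
/-- The Fourier-symbol eigenvalue problem for the acoustic propagator at horizontal frequency
`ξ = (ξ₁, ξ₂) ∈ ℝ²` and vertical frequency `k ∈ ℤ` admits a nontrivial solution `(p̂, û)` only if
`λ² = −(1 + |ξ|² + k² ± √((1 + |ξ|² + k²)² − 4k²))/2`. -/
theorem stmt3 (ξ1 ξ2 : ℝ) (k : ℤ) (lam ph : ℂ) (uh : Fin 3 → ℂ)
    (hnontriv : ¬(ph = 0 ∧ uh = 0))
    (h1 : Complex.I * ((ξ1 : ℂ) * uh 0 + (ξ2 : ℂ) * uh 1 + (k : ℂ) * uh 2) = lam * ph)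
    (h2 : Complex.I * (ξ1 : ℂ) * ph - uh 1 = lam * uh 0)
    (h3 : Complex.I * (ξ2 : ℂ) * ph + uh 0 = lam * uh 1)
    (h4 : Complex.I * (k : ℂ) * ph = lam * uh 2) :
    lam ^ 2 = -(((1 + (ξ1 ^ 2 + ξ2 ^ 2) + (k : ℝ) ^ 2
        + Real.sqrt ((1 + (ξ1 ^ 2 + ξ2 ^ 2) + (k : ℝ) ^ 2) ^ 2 - 4 * (k : ℝ) ^ 2)) : ℝ) : ℂ) / 2
    ∨ lam ^ 2 = -(((1 + (ξ1 ^ 2 + ξ2 ^ 2) + (k : ℝ) ^ 2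
        - Real.sqrt ((1 + (ξ1 ^ 2 + ξ2 ^ 2) + (k : ℝ) ^ 2) ^ 2 - 4 * (k : ℝ) ^ 2)) : ℝ) : ℂ) / 2 := by
  -- Step 1: the quartic characteristic equation
  have hQ : lam ^ 4 + (1 + (ξ1 : ℂ) ^ 2 + (ξ2 : ℂ) ^ 2 + (k : ℂ) ^ 2) * lam ^ 2
      + (k : ℂ) ^ 2 = 0 := by
    have key : (lam ^ 4 + (1 + (ξ1 : ℂ) ^ 2 + (ξ2 : ℂ) ^ 2 + (k : ℂ) ^ 2) * lam ^ 2
        + (k : ℂ) ^ 2) * ph = 0 := by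
      linear_combination (-lam * (lam ^ 2 + 1)) * h1
        + (-Complex.I * (ξ1 : ℂ) * lam ^ 2 - Complex.I * (ξ2 : ℂ) * lam) * h2
        + (Complex.I * (ξ1 : ℂ) * lam - Complex.I * (ξ2 : ℂ) * lam ^ 2) * h3
        + (-Complex.I * (k : ℂ) * (lam ^ 2 + 1)) * h4
        + ((lam ^ 2 * (ξ1:ℂ) ^ 2 + lam ^ 2 * (ξ2:ℂ) ^ 2 + lam ^ 2 * (k:ℂ) ^ 2 + (k:ℂ) ^ 2) * ph) * Complex.I_sq
    rcases mul_eq_zero.mp key with h | hph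
    · exact h
    · -- ph = 0 case
      have huh : uh ≠ 0 := fun h => hnontriv ⟨hph, h⟩
      have hu0 : (lam ^ 2 + 1) * uh 0 = 0 := by
        linear_combination (-lam) * h2 + h3
          + (Complex.I * (ξ1 : ℂ) * lam - Complex.I * (ξ2 : ℂ)) * hph
      have hu1 : (lam ^ 2 + 1) * uh 1 = 0 := by
        linear_combination -h2 - lam * h3
          + (Complex.I * (ξ1 : ℂ) + Complex.I * (ξ2 : ℂ) * lam) * hph
      by_cases hl : lam ^ 2 + 1 = 0
      · -- λ² = −1
        have hlne : lam ≠ 0 := by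
          intro h; rw [h] at hl; norm_num at hl
        have hu2 : uh 2 = 0 := by
          have : lam * uh 2 = 0 := by linear_combination -h4 + Complex.I * (k : ℂ) * hph
          exact (mul_eq_zero.mp this).resolve_left hlne
        have hu0ne : uh 0 ≠ 0 := by
          intro h0
          have h1' : uh 1 = 0 := by
            have : lam * uh 1 = 0 := by linear_combination -h3 + Complex.I * (ξ2 : ℂ) * hph + h0
            exact (mul_eq_zero.mp this).resolve_left hlne
          exact huh (by funext i; fin_cases i <;> simp [h0, h1', hu2])
        have hxi : ((ξ1 : ℂ) - (ξ2 : ℂ) * lam) * uh 0 = 0 := by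
          have hI : Complex.I ≠ 0 := Complex.I_ne_zero
          have hx : Complex.I * (((ξ1 : ℂ) - (ξ2 : ℂ) * lam) * uh 0) = 0 := by
            linear_combination h1 + Complex.I * (ξ2 : ℂ) * h2 + lam * hph
              - Complex.I * (k : ℂ) * hu2 - Complex.I ^ 2 * (ξ1 : ℂ) * (ξ2 : ℂ) * hph
          exact (mul_eq_zero.mp hx).resolve_left hI
        have hxi2 : (ξ1 : ℂ) = (ξ2 : ℂ) * lam :=
          sub_eq_zero.mp ((mul_eq_zero.mp hxi).resolve_right hu0ne)
        linear_combination (lam ^ 2 + (k : ℂ) ^ 2 + (ξ2 : ℂ) ^ 2 * lam ^ 2) * hl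
          + ((ξ1 : ℂ) + (ξ2 : ℂ) * lam) * lam ^ 2 * hxi2
      · -- λ² ≠ −1 : u0 = u1 = 0
        have h0 : uh 0 = 0 := (mul_eq_zero.mp hu0).resolve_left hl
        have h1' : uh 1 = 0 := (mul_eq_zero.mp hu1).resolve_left hl
        have hu2ne : uh 2 ≠ 0 := by
          intro h2'
          exact huh (by funext i; fin_cases i <;> simp [h0, h1', h2'])
        have hlam0 : lam = 0 := by
          have : lam * uh 2 = 0 := by linear_combination -h4 + Complex.I * (k : ℂ) * hph
          exact (mul_eq_zero.mp this).resolve_right hu2ne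
        have hk0 : (k : ℂ) = 0 := by
          have hx : Complex.I * ((k : ℂ) * uh 2) = 0 := by
            linear_combination h1 + lam * hph
              - Complex.I * (ξ1 : ℂ) * h0 - Complex.I * (ξ2 : ℂ) * h1'
          have := (mul_eq_zero.mp hx).resolve_left Complex.I_ne_zero
          exact (mul_eq_zero.mp this).resolve_right hu2ne
        rw [hlam0, hk0]; ring
  -- Step 2: factor the quartic
  have ha1 : (0:ℝ) ≤ ((k:ℝ) - 1) ^ 2 + (ξ1 ^ 2 + ξ2 ^ 2) := by positivity
  have ha2 : (0:ℝ) ≤ ((k:ℝ) + 1) ^ 2 + (ξ1 ^ 2 + ξ2 ^ 2) := by positivity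
  have hdisc : (0:ℝ) ≤ (1 + (ξ1 ^ 2 + ξ2 ^ 2) + (k : ℝ) ^ 2) ^ 2 - 4 * (k : ℝ) ^ 2 := by
    nlinarith [mul_nonneg ha1 ha2]
  set s : ℝ := Real.sqrt ((1 + (ξ1 ^ 2 + ξ2 ^ 2) + (k : ℝ) ^ 2) ^ 2 - 4 * (k : ℝ) ^ 2) with hs
  have hs2 : s ^ 2 = (1 + (ξ1 ^ 2 + ξ2 ^ 2) + (k : ℝ) ^ 2) ^ 2 - 4 * (k : ℝ) ^ 2 :=
    Real.sq_sqrt hdisc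
  have hs2c : ((s : ℂ)) ^ 2
      = (1 + (ξ1 : ℂ) ^ 2 + (ξ2 : ℂ) ^ 2 + (k : ℂ) ^ 2) ^ 2 - 4 * (k : ℂ) ^ 2 := by
    have := congrArg (Complex.ofReal) hs2
    push_cast at this
    linear_combination this
  have factor : (lam ^ 2 + ((1 + (ξ1 : ℂ) ^ 2 + (ξ2 : ℂ) ^ 2 + (k : ℂ) ^ 2) + (s : ℂ)) / 2)
      * (lam ^ 2 + ((1 + (ξ1 : ℂ) ^ 2 + (ξ2 : ℂ) ^ 2 + (k : ℂ) ^ 2) - (s : ℂ)) / 2) = 0 := by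
    linear_combination hQ - (1/4 : ℂ) * hs2c
  rcases mul_eq_zero.mp factor with h | h
  · left
    push_cast
    linear_combination h
  · right
    push_cast
    linear_combination h
end

section
/- Let H be a Hilbert space, U : ℝ → B(H) a strongly continuous one-parameter unitary group, C a non-negative bounded self-adjoint operator on H, and suppose (1/T)∫₀^T ‖√C U(t/ε) v‖² dt ≤ ω(ε)‖v‖² for all v ∈ H. Then for every X ∈ L²(0,T;H), (1/T²)∫₀^T ‖√C ∫₀^t U((t−s)/ε) X(s) ds‖² dt ≤ ω(ε) ∫₀^T ‖X(s)‖² ds. -/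
/-!
Minkowski's integral inequality gives `‖√C ∫₀ᵗ U((t-s)/ε) X(s) ds‖ ≤ ∫₀ᵗ ‖√C U((t-s)/ε) X(s)‖ ds`,
and Cauchy–Schwarz on `(0, t] ⊆ (0, T]` bounds the square of the right-hand side by
`T ∫₀ᵀ ‖√C U((t-s)/ε) X(s)‖² ds`. After exchanging the order of integration, the group law
`U((t-s)/ε) = U(t/ε) U(-s/ε)` turns the inner `t`-integral into the hypothesis applied to
`v = U(-s/ε) X(s)`, and unitarity gives `‖v‖ = ‖X(s)‖`.
-/

open MeasureTheory Set

theorem ContinuousLinearMap.norm_apply_integral_le_integral_norm_apply {α 𝕜 E F : Type*}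
    [MeasurableSpace α] {μ : Measure α} [RCLike 𝕜]
    [NormedAddCommGroup E] [NormedSpace ℝ E] [NormedSpace 𝕜 E] [CompleteSpace E]
    [NormedAddCommGroup F] [NormedSpace ℝ F] [NormedSpace 𝕜 F] [CompleteSpace F]
    (L : E →L[𝕜] F) (g : α → E) :
    ‖L (∫ a, g a ∂μ)‖ ≤ ∫ a, ‖L (g a)‖ ∂μ := by
  by_cases hg : Integrable g μ
  · rw [← L.integral_comp_comm hg]
    exact norm_integral_le_integral_norm _
  · rw [integral_undef hg, map_zero, norm_zero]
    exact integral_nonneg fun _ => norm_nonneg _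

theorem sq_integral_le_measureReal_univ_mul_integral_sq {α : Type*} [MeasurableSpace α]
    {μ : Measure α} [IsFiniteMeasure μ] {f : α → ℝ} (hf : MemLp f 2 μ) :
    (∫ a, f a ∂μ) ^ 2 ≤ μ.real univ * ∫ a, f a ^ 2 ∂μ := by
  rcases eq_zero_or_neZero μ with rfl | _
  · simp
  have jensen : (⨍ a, f a ∂μ) ^ 2 ≤ ⨍ a, f a ^ 2 ∂μ :=
    (even_two.convexOn_pow (𝕜 := ℝ)).map_average_le (continuous_pow 2).continuousOn
      isClosed_univ (ae_of_all _ fun _ => mem_univ _) (hf.integrable one_le_two)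
      ((memLp_two_iff_integrable_sq hf.1).1 hf)
  have hμ : 0 < μ.real univ := by
    simp [measureReal_def, ENNReal.toReal_pos_iff, measure_lt_top, NeZero.ne]
  rw [average_eq, average_eq, smul_eq_mul, smul_eq_mul, mul_pow] at jensen
  field_simp at jensen
  nlinarith [jensen]

theorem continuous_uncurry_of_norm_apply_le {α 𝕜 E F : Type*} [TopologicalSpace α]
    [NormedField 𝕜] [NormedAddCommGroup E] [NormedSpace 𝕜 E]
    [NormedAddCommGroup F] [NormedSpace 𝕜 F]
    (U : α → E →L[𝕜] F) (hU : ∀ t x, ‖U t x‖ ≤ ‖x‖) (hcont : ∀ x, Continuous fun t => U t x) :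
    Continuous fun p : α × E => U p.1 p.2 :=
  continuous_prod_of_continuous_lipschitzWith' _ 1
    (fun t => LipschitzWith.of_dist_le_mul fun x y => by
      simpa [dist_eq_norm, ← map_sub] using hU t (x - y))
    hcont

theorem integral_sq_norm_apply_volterra_le {𝕜 E F : Type*} [RCLike 𝕜]
    [NormedAddCommGroup E] [NormedSpace ℝ E] [NormedSpace 𝕜 E] [CompleteSpace E]
    [NormedAddCommGroup F] [NormedSpace ℝ F] [NormedSpace 𝕜 F] [CompleteSpace F]
    (L : E →L[𝕜] F) (K : ℝ → ℝ → E) {T : ℝ}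
    (hKm : ∀ t, AEStronglyMeasurable (K t) (volume.restrict (Ioc 0 T)))
    (hK : Integrable (fun p : ℝ × ℝ => ‖L (K p.1 p.2)‖ ^ 2)
      ((volume.restrict (Ioc 0 T)).prod (volume.restrict (Ioc 0 T)))) :
    ∫ t in Ioc 0 T, ‖L (∫ s in 0..t, K t s)‖ ^ 2
      ≤ T * ∫ s in Ioc 0 T, ∫ t in Ioc 0 T, ‖L (K t s)‖ ^ 2 := by
  set μ := volume.restrict (Ioc (0:ℝ) T)
  have hpointwise : ∀ᵐ t ∂μ, ‖L (∫ s in 0..t, K t s)‖ ^ 2 ≤ T * ∫ s, ‖L (K t s)‖ ^ 2 ∂μ := by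
    filter_upwards [ae_restrict_mem measurableSet_Ioc, hK.prod_right_ae]
      with t ⟨ht0, htT⟩ hint
    have hsub : Ioc 0 t ⊆ Ioc 0 T := Ioc_subset_Ioc_right htT
    have hle : volume.restrict (Ioc 0 t) ≤ μ := Measure.restrict_mono hsub le_rfl
    have hmem : MemLp (fun s => ‖L (K t s)‖) 2 (volume.restrict (Ioc 0 t)) :=
      (memLp_two_iff_integrable_sq
        ((L.continuous.comp_aestronglyMeasurable (hKm t)).norm.mono_measure hle)).2
        (hint.mono_measure hle)
    calc ‖L (∫ s in 0..t, K t s)‖ ^ 2 ≤ (∫ s in Ioc 0 t, ‖L (K t s)‖) ^ 2 := by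
          rw [intervalIntegral.integral_of_le ht0.le]
          gcongr
          exact L.norm_apply_integral_le_integral_norm_apply _
      _ ≤ t * ∫ s in Ioc 0 t, ‖L (K t s)‖ ^ 2 := by
          simpa [Real.volume_Ioc, ht0.le] using sq_integral_le_measureReal_univ_mul_integral_sq hmem
      _ ≤ T * ∫ s, ‖L (K t s)‖ ^ 2 ∂μ :=
          mul_le_mul htT
            (setIntegral_mono_set hint (ae_of_all _ fun _ => by positivity) hsub.eventuallyLE)
            (integral_nonneg fun _ => by positivity) (ht0.le.trans htT)
  calc ∫ t, ‖L (∫ s in 0..t, K t s)‖ ^ 2 ∂μ ≤ ∫ t, T * ∫ s, ‖L (K t s)‖ ^ 2 ∂μ ∂μ :=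
        integral_mono_of_nonneg (ae_of_all _ fun _ => by positivity)
          (hK.integral_prod_left.const_mul T) hpointwise
    _ = T * ∫ s, ∫ t, ‖L (K t s)‖ ^ 2 ∂μ ∂μ := by
        rw [integral_const_mul, integral_integral_swap hK]

section Propagator

variable {𝕜 H F : Type*} [RCLike 𝕜] [NormedAddCommGroup H] [NormedSpace 𝕜 H]
  [NormedAddCommGroup F] [NormedSpace 𝕜 F] (U : ℝ → H →L[𝕜] H) (A : H →L[𝕜] F)

theorem setIntegral_sq_norm_apply_sub_div_le (hgroup : ∀ s t : ℝ, U (s + t) = (U s).comp (U t))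
    (hiso : ∀ t x, ‖U t x‖ = ‖x‖) {T ε c : ℝ} (hT : 0 < T)
    (hbound : ∀ v, (1/T) * ∫ t in (0:ℝ)..T, ‖A (U (t/ε) v)‖ ^ 2 ≤ c * ‖v‖ ^ 2) (s : ℝ) (x : H) :
    ∫ t in Ioc 0 T, ‖A (U ((t - s) / ε) x)‖ ^ 2 ≤ T * (c * ‖x‖ ^ 2) := by
  have hfactor (t : ℝ) : U ((t - s) / ε) x = U (t / ε) (U (-s / ε) x) := by
    rw [show (t - s) / ε = t / ε + -s / ε by ring, hgroup]
    rfl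
  have hv := hbound (U (-s / ε) x)
  rw [hiso, intervalIntegral.integral_of_le hT.le, one_div, inv_mul_le_iff₀ hT] at hv
  simpa only [hfactor] using hv

theorem integrable_sq_norm_apply_sub_div_prod (hiso : ∀ t x, ‖U t x‖ = ‖x‖)
    (hcont : ∀ x, Continuous fun t => U t x) {μ : Measure ℝ} [IsFiniteMeasure μ] {X : ℝ → H}
    (hX : MemLp X 2 μ) (ε : ℝ) :
    Integrable (fun p : ℝ × ℝ => ‖A (U ((p.1 - p.2) / ε) (X p.2))‖ ^ 2) (μ.prod μ) := by
  have hUcont := continuous_uncurry_of_norm_apply_le U (fun t x => (hiso t x).le) hcont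
  have hX2 : Integrable (fun s => ‖X s‖ ^ 2) μ := (memLp_two_iff_integrable_sq_norm hX.1).1 hX
  refine ((integrable_const (‖A‖ ^ 2)).mul_prod hX2).mono' ?_ (ae_of_all _ fun p => ?_)
  · exact ((A.continuous.comp hUcont).comp_aestronglyMeasurable
      (((continuous_fst.sub continuous_snd).div_const ε).aestronglyMeasurable.prodMk
        hX.1.comp_snd)).norm.pow 2
  · rw [Real.norm_of_nonneg (by positivity), ← mul_pow]
    gcongr
    exact (A.le_opNorm _).trans_eq (by rw [hiso])

end Propagator

theorem stmt7_general {H : Type*} [NormedAddCommGroup H] [InnerProductSpace ℂ H] [CompleteSpace H]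
    (U : ℝ → H →L[ℂ] H)
    (hgroup : ∀ s t : ℝ, U (s + t) = (U s).comp (U t))
    (hiso : ∀ (t : ℝ) (x : H), ‖U t x‖ = ‖x‖)
    (hcont : ∀ x : H, Continuous fun t => U t x)
    (sqrtC : H →L[ℂ] H)
    (T ε : ℝ) (hT : 0 < T) (ω : ℝ → ℝ)
    (hbound : ∀ v : H, (1/T) * ∫ t in (0:ℝ)..T, ‖sqrtC (U (t/ε) v)‖ ^ 2 ≤ ω ε * ‖v‖ ^ 2)
    (X : ℝ → H)
    (hX : MemLp X 2 (volume.restrict (Set.Ioc 0 T))) :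
    (1/T^2) * ∫ t in (0:ℝ)..T, ‖sqrtC (∫ s in (0:ℝ)..t, U ((t - s)/ε) (X s))‖ ^ 2
      ≤ ω ε * ∫ s in (0:ℝ)..T, ‖X s‖ ^ 2 := by
  rw [intervalIntegral.integral_of_le hT.le, intervalIntegral.integral_of_le hT.le]
  set μ := volume.restrict (Ioc (0:ℝ) T)
  have hUcont := continuous_uncurry_of_norm_apply_le U (fun t x => (hiso t x).le) hcont
  have hKm (t : ℝ) : AEStronglyMeasurable (fun s => U ((t - s) / ε) (X s)) μ :=
    hUcont.comp_aestronglyMeasurable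
      (((continuous_const.sub continuous_id).div_const ε).aestronglyMeasurable.prodMk hX.1)
  have hX2 : Integrable (fun s => ‖X s‖ ^ 2) μ := (memLp_two_iff_integrable_sq_norm hX.1).1 hX
  calc (1/T^2) * ∫ t, ‖sqrtC (∫ s in (0:ℝ)..t, U ((t - s)/ε) (X s))‖ ^ 2 ∂μ
      ≤ (1/T^2) * (T * ∫ s, ∫ t, ‖sqrtC (U ((t - s) / ε) (X s))‖ ^ 2 ∂μ ∂μ) := by
        gcongr
        exact integral_sq_norm_apply_volterra_le sqrtC _ hKm
          (integrable_sq_norm_apply_sub_div_prod U sqrtC hiso hcont hX ε)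
    _ ≤ (1/T^2) * (T * ∫ s, T * (ω ε * ‖X s‖ ^ 2) ∂μ) := by
        refine mul_le_mul_of_nonneg_left (mul_le_mul_of_nonneg_left ?_ hT.le) (by positivity)
        refine integral_mono_of_nonneg (ae_of_all _ fun _ => integral_nonneg fun _ => by positivity)
          ((hX2.const_mul _).const_mul T) (ae_of_all _ fun s => ?_)
        exact setIntegral_sq_norm_apply_sub_div_le U sqrtC hgroup hiso hT hbound s (X s)
    _ = ω ε * ∫ s, ‖X s‖ ^ 2 ∂μ := by
        rw [integral_const_mul, integral_const_mul]
        field_simp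

/-- Duhamel-type RAGE estimate: if `U` is a strongly continuous unitary group on a Hilbert
space `H`, `C` a non-negative bounded self-adjoint operator with square root `√C`, and
`(1/T)∫₀ᵀ ‖√C U(t/ε) v‖² dt ≤ ω(ε)‖v‖²` for all `v`, then for every `X ∈ L²(0,T;H)`,
`(1/T²)∫₀ᵀ ‖√C ∫₀ᵗ U((t−s)/ε) X(s) ds‖² dt ≤ ω(ε)∫₀ᵀ ‖X(s)‖² ds`. -/
theorem stmt7 {H : Type*} [NormedAddCommGroup H] [InnerProductSpace ℂ H] [CompleteSpace H]
    (U : ℝ → H →L[ℂ] H)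
    (hgroup : ∀ s t : ℝ, U (s + t) = (U s).comp (U t))
    (hU0 : U 0 = ContinuousLinearMap.id ℂ H)
    (hiso : ∀ (t : ℝ) (x : H), ‖U t x‖ = ‖x‖)
    (hcont : ∀ x : H, Continuous fun t => U t x)
    (C sqrtC : H →L[ℂ] H) (hC : IsSelfAdjoint C)
    (hCpos : ∀ x : H, 0 ≤ (inner ℂ (C x) x : ℂ).re)
    (hsq : sqrtC.comp sqrtC = C) (hsqsa : IsSelfAdjoint sqrtC)
    (hsqpos : ∀ x : H, 0 ≤ (inner ℂ (sqrtC x) x : ℂ).re)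
    (T ε : ℝ) (hT : 0 < T) (hε : 0 < ε) (ω : ℝ → ℝ)
    (hbound : ∀ v : H, (1/T) * ∫ t in (0:ℝ)..T, ‖sqrtC (U (t/ε) v)‖ ^ 2 ≤ ω ε * ‖v‖ ^ 2)
    (X : ℝ → H)
    (hX : MemLp X 2 (volume.restrict (Set.Ioc 0 T))) :
    (1/T^2) * ∫ t in (0:ℝ)..T, ‖sqrtC (∫ s in (0:ℝ)..t, U ((t - s)/ε) (X s))‖ ^ 2
      ≤ ω ε * ∫ s in (0:ℝ)..T, ‖X s‖ ^ 2 :=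
  stmt7_general U hgroup hiso hcont sqrtC T ε hT ω hbound X hX
end
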